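/- arXiv:2505.22288 — 3 statements merged into one kernel-verified Lean document; each statement's English description precedes it below -/
import Mathlib

section
/- Let d ≥ 0 and f_upper(p) := p(1−p)(e^d − 1)/(p(e^d − 1) + 1) on [0,1]. Then f_upper attains its maximum on [0,1] at p₁ = 1/(√(e^d) + 1), with maximum value (√(e^d) − 1)/(√(e^d) + 1). -/
theorem f_upper_max (d : ℝ) (hd : 0 ≤ d) :
    (1 / (Real.sqrt (Real.exp d) + 1)) * (1 - 1 / (Real.sqrt (Real.exp d) + 1)) *
        (Real.exp d - 1) / ((1 / (Real.sqrt (Real.exp d) + 1)) * (Real.exp d - 1) + 1) =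
      (Real.sqrt (Real.exp d) - 1) / (Real.sqrt (Real.exp d) + 1) ∧
    (1 / (Real.sqrt (Real.exp d) + 1)) ∈ Set.Icc (0:ℝ) 1 ∧
    ∀ p ∈ Set.Icc (0:ℝ) 1,
      p * (1 - p) * (Real.exp d - 1) / (p * (Real.exp d - 1) + 1) ≤
        (Real.sqrt (Real.exp d) - 1) / (Real.sqrt (Real.exp d) + 1) := by
  set s := Real.sqrt (Real.exp d) with hs
  have hs2 : s ^ 2 = Real.exp d := Real.sq_sqrt (Real.exp_pos d).le
  have hs1 : 1 ≤ s := by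
    rw [hs, show (1:ℝ) = Real.sqrt 1 by simp]
    exact Real.sqrt_le_sqrt (by simpa using Real.one_le_exp hd)
  have hsp : 0 < s + 1 := by linarith
  refine ⟨?_, ⟨?_, ?_⟩, ?_⟩
  · rw [← hs2]
    have hden : (1 / (s + 1)) * (s ^ 2 - 1) + 1 = s := by
      field_simp
      ring
    rw [hden]
    have hs0 : s ≠ 0 := by linarith
    field_simp
    ring
  · positivity
  · rw [div_le_one hsp]; linarith
  · intro p hp
    obtain ⟨hp0, hp1⟩ := hp
    rw [← hs2]
    have hD : 0 < p * (s ^ 2 - 1) + 1 := by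
      have : 0 ≤ p * (s ^ 2 - 1) := mul_nonneg hp0 (by nlinarith)
      linarith
    rw [div_le_div_iff₀ hD hsp]
    nlinarith [sq_nonneg (p * (s + 1) - 1), mul_nonneg (sub_nonneg.2 hs1) (sq_nonneg (p * (s + 1) - 1))]
end

section
/- Let d ≥ 0 and f_lower(p) := p(1−p)(1 − e^{−d})/(p(e^{−d} − 1) + 1) on [0,1]. Then f_lower attains its maximum on [0,1] at p₂ = √(e^d)/(√(e^d) + 1), with maximum value (√(e^d) − 1)/(√(e^d) + 1). -/
theorem f_lower_max (d : ℝ) (hd : 0 ≤ d) :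
    (Real.sqrt (Real.exp d) / (Real.sqrt (Real.exp d) + 1)) *
        (1 - Real.sqrt (Real.exp d) / (Real.sqrt (Real.exp d) + 1)) * (1 - Real.exp (-d)) /
        ((Real.sqrt (Real.exp d) / (Real.sqrt (Real.exp d) + 1)) * (Real.exp (-d) - 1) + 1) =
      (Real.sqrt (Real.exp d) - 1) / (Real.sqrt (Real.exp d) + 1) ∧
    (Real.sqrt (Real.exp d) / (Real.sqrt (Real.exp d) + 1)) ∈ Set.Icc (0:ℝ) 1 ∧
    ∀ p ∈ Set.Icc (0:ℝ) 1,
      p * (1 - p) * (1 - Real.exp (-d)) / (p * (Real.exp (-d) - 1) + 1) ≤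
        (Real.sqrt (Real.exp d) - 1) / (Real.sqrt (Real.exp d) + 1) := by
  set s := Real.sqrt (Real.exp d) with hs
  have hexp : (0:ℝ) < Real.exp d := Real.exp_pos d
  have hs2 : s ^ 2 = Real.exp d := Real.sq_sqrt hexp.le
  have hs1 : 1 ≤ s := by
    rw [hs, show (1:ℝ) = Real.sqrt 1 by simp]
    exact Real.sqrt_le_sqrt (by simpa using Real.one_le_exp hd)
  have hs0 : (0:ℝ) < s := by linarith
  have hsp : (0:ℝ) < s + 1 := by linarith
  have he : Real.exp (-d) = (s ^ 2)⁻¹ := by rw [Real.exp_neg, hs2]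
  have hs2ne : s ^ 2 ≠ 0 := by positivity
  refine ⟨?_, ?_, ?_⟩
  · rw [he]
    have hden : s / (s + 1) * ((s ^ 2)⁻¹ - 1) + 1 = 1 / s := by
      field_simp
      ring
    rw [hden]
    field_simp
    ring
  · constructor
    · positivity
    · rw [div_le_one hsp]; linarith
  · intro p hp
    obtain ⟨hp0, hp1⟩ := hp
    rw [he]
    have hD : (0:ℝ) < p * ((s ^ 2)⁻¹ - 1) + 1 := by
      have hinv : (0:ℝ) < (s ^ 2)⁻¹ := by positivity
      have h1 : (s ^ 2)⁻¹ - 1 ≤ 0 := by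
        have hsq : (1:ℝ) ≤ s ^ 2 := by nlinarith
        have hc : s ^ 2 * (s ^ 2)⁻¹ = 1 := mul_inv_cancel₀ hs2ne
        nlinarith
      nlinarith
    rw [div_le_div_iff₀ hD hsp]
    have key0 : p * (1 - p) * (s ^ 2 - 1) * (s + 1) ≤
        (s - 1) * (p * (1 - s ^ 2) + s ^ 2) := by
      nlinarith [mul_nonneg (sub_nonneg.2 hs1) (sq_nonneg (p * (s + 1) - s))]
    have e1 : p * (1 - p) * (1 - (s ^ 2)⁻¹) * (s + 1) =
        p * (1 - p) * (s ^ 2 - 1) * (s + 1) / s ^ 2 := by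
      field_simp
    have e2 : (s - 1) * (p * ((s ^ 2)⁻¹ - 1) + 1) =
        (s - 1) * (p * (1 - s ^ 2) + s ^ 2) / s ^ 2 := by
      field_simp
    rw [e1, e2]
    gcongr
end

section
/- Let d ≥ 0 and p, p' ∈ [0,1] with p·e^{−d}/(p(e^{−d}−1)+1) ≤ p' ≤ p·e^{d}/(p(e^{d}−1)+1). Then |p − p'| ≤ (√(e^d) − 1)/(√(e^d) + 1). -/
theorem chan_darwiche_abs_bound (d : ℝ) (hd : 0 ≤ d) (p p' : ℝ)
    (hp : p ∈ Set.Icc (0:ℝ) 1) (hp' : p' ∈ Set.Icc (0:ℝ) 1)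
    (hlow : p * Real.exp (-d) / (p * (Real.exp (-d) - 1) + 1) ≤ p')
    (hupp : p' ≤ p * Real.exp d / (p * (Real.exp d - 1) + 1)) :
    |p - p'| ≤ (Real.sqrt (Real.exp d) - 1) / (Real.sqrt (Real.exp d) + 1) := by
  obtain ⟨hp0, hp1⟩ := hp
  obtain ⟨hp'0, hp'1⟩ := hp'
  set t := Real.exp d with ht
  set u := Real.exp (-d) with hu
  set s := Real.sqrt t with hs
  have ht1 : 1 ≤ t := Real.one_le_exp hd
  have ht0 : 0 < t := lt_of_lt_of_le one_pos ht1
  have hu0 : 0 < u := Real.exp_pos _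
  have hut : u * t = 1 := by
    rw [hu, ht, ← Real.exp_add]; simp
  have hs1 : 1 ≤ s := by
    rw [hs, show (1:ℝ) = Real.sqrt 1 from (Real.sqrt_one).symm]
    exact Real.sqrt_le_sqrt ht1
  have hs2 : s ^ 2 = t := Real.sq_sqrt ht0.le
  have hu1 : u ≤ 1 := by nlinarith
  have hD1 : 0 < p * (t - 1) + 1 := by nlinarith
  have hD2 : 0 < p * (u - 1) + 1 := by
    nlinarith [mul_nonneg (sub_nonneg.2 hu1) (sub_nonneg.2 hp1)]
  have h1 : p' * (p * (t - 1) + 1) ≤ p * t := (le_div_iff₀ hD1).mp hupp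
  have h2 : p * u ≤ p' * (p * (u - 1) + 1) := (div_le_iff₀ hD2).mp hlow
  rw [← hs2] at h1 hD1 hut
  have hsp : 0 < s + 1 := by linarith
  -- from h2 and u * s^2 = 1, eliminate u
  have h2' : p ≤ p' * (s ^ 2 - p * (s ^ 2 - 1)) := by
    have h3 := mul_le_mul_of_nonneg_right h2 (by positivity : (0:ℝ) ≤ s ^ 2)
    have e1 : p * (u * s ^ 2) = p * 1 := by rw [hut]
    have e2 : (p' * p) * (u * s ^ 2) = (p' * p) * 1 := by rw [hut]
    nlinarith [h3, e1, e2]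
  have hE : 0 < s ^ 2 - p * (s ^ 2 - 1) := by nlinarith
  rw [abs_sub_le_iff]
  constructor
  · have key : (p - p') * (s + 1) * (s ^ 2 - p * (s ^ 2 - 1)) ≤
        (s - 1) * (s ^ 2 - p * (s ^ 2 - 1)) := by
      nlinarith [mul_le_mul_of_nonneg_right h2' hsp.le,
        mul_nonneg (sub_nonneg.2 hs1) (sq_nonneg ((s + 1) * p - s))]
    rw [le_div_iff₀ hsp]
    exact le_of_mul_le_mul_right key hE
  · have key : (p' - p) * (s + 1) * (p * (s ^ 2 - 1) + 1) ≤
        (s - 1) * (p * (s ^ 2 - 1) + 1) := by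
      nlinarith [mul_le_mul_of_nonneg_right h1 hsp.le,
        mul_nonneg (sub_nonneg.2 hs1) (sq_nonneg ((s + 1) * p - 1))]
    rw [le_div_iff₀ hsp]
    exact le_of_mul_le_mul_right key hD1
end
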